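/- Let A be a Hopf algebra and P a right A-comodule algebra. The set GT(P) of convolution-invertible k-linear maps f : A → P satisfying Δ_R ∘ f = (f ⊗ id) ∘ ad_R and f(1) = 1 is a group under convolution, where ad_R(a) = a₍₂₎ ⊗ S(a₍₁₎)a₍₃₎ is the right adjoint coaction. -/
import Mathlib


open TensorProduct

variable (k : Type*) [Field k] {A P : Type*} [Ring A] [HopfAlgebra k A]
  [Ring P] [Algebra k P]

/-- Convolution of linear maps `A → P`: `(f * g)(a) = f(a₍₁₎) g(a₍₂₎)`. -/
noncomputable def conv (f g : A →ₗ[k] P) : A →ₗ[k] P :=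
  (LinearMap.mul' k P) ∘ₗ (TensorProduct.map f g) ∘ₗ (Coalgebra.comul (R := k) (A := A))

/-- The convolution unit `η_P ∘ ε`. -/
noncomputable def convUnit : A →ₗ[k] P :=
  (Algebra.linearMap k P) ∘ₗ (Coalgebra.counit (R := k) (A := A))

/-- The right adjoint coaction `ad_R : A → A ⊗ A`, `a ↦ a₍₂₎ ⊗ S(a₍₁₎)a₍₃₎`. -/
noncomputable def adR : A →ₗ[k] A ⊗[k] A :=
  (LinearMap.lTensor A (LinearMap.mul' k A)) ∘ₗ
    (TensorProduct.assoc k A A A).toLinearMap ∘ₗ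
      (LinearMap.rTensor A ((TensorProduct.comm k A A).toLinearMap ∘ₗ
        (LinearMap.rTensor A (HopfAlgebra.antipode (R := k) (A := A))))) ∘ₗ
        (LinearMap.rTensor A (Coalgebra.comul (R := k) (A := A))) ∘ₗ
          (Coalgebra.comul (R := k) (A := A))

/-- A gauge transformation: a convolution-invertible `f : A → P` intertwining
`Δ_R` with `ad_R` and satisfying `f(1) = 1`. -/
noncomputable def IsGaugeTransformation (ρ : P →ₐ[k] P ⊗[k] A) (f : A →ₗ[k] P) : Prop :=
  (∃ g : A →ₗ[k] P, conv k f g = convUnit k ∧ conv k g f = convUnit k) ∧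
    (ρ.toLinearMap ∘ₗ f = (TensorProduct.map f LinearMap.id) ∘ₗ adR k) ∧
      f 1 = 1

section Aux

variable {k} {B C : Type*} [Ring B] [Algebra k B] [Ring C] [Algebra k C]

noncomputable def conv' (f g : A →ₗ[k] B) : A →ₗ[k] B :=
  (LinearMap.mul' k B) ∘ₗ (TensorProduct.map f g) ∘ₗ (Coalgebra.comul (R := k) (A := A))

noncomputable def cunit : A →ₗ[k] B :=
  (Algebra.linearMap k B) ∘ₗ (Coalgebra.counit (R := k) (A := A))

lemma conv_eq_conv' (f g : A →ₗ[k] P) : conv k f g = conv' f g := rfl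

lemma convUnit_eq_cunit : convUnit k (A := A) (P := P) = cunit := rfl

lemma algHom_comp_mul' (φ : B →ₐ[k] C) :
    φ.toLinearMap ∘ₗ LinearMap.mul' k B =
      LinearMap.mul' k C ∘ₗ TensorProduct.map φ.toLinearMap φ.toLinearMap := by
  ext x y
  simp [LinearMap.mul'_apply]

lemma algHom_comp_conv (φ : B →ₐ[k] C) (f g : A →ₗ[k] B) :
    φ.toLinearMap ∘ₗ conv' f g = conv' (φ.toLinearMap ∘ₗ f) (φ.toLinearMap ∘ₗ g) := by
  simp only [conv', ← LinearMap.comp_assoc, algHom_comp_mul']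
  congr 1
  rw [LinearMap.comp_assoc, ← TensorProduct.map_comp]

lemma algHom_comp_cunit (φ : B →ₐ[k] C) :
    φ.toLinearMap ∘ₗ (cunit (B := B)) = (cunit (B := C) (A := A)) := by
  unfold cunit
  rw [← LinearMap.comp_assoc]
  congr 1
  apply LinearMap.ext_ring
  simp

lemma conv'_cunit_left (f : A →ₗ[k] B) : conv' cunit f = f := by
  unfold conv' cunit
  rw [← LinearMap.comp_assoc (Coalgebra.comul) (TensorProduct.map _ f) (LinearMap.mul' k B),
    ← LinearMap.map_comp_rTensor, LinearMap.comp_assoc, LinearMap.comp_assoc,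
    Coalgebra.rTensor_counit_comp_comul]
  ext a
  simp [LinearMap.mul'_apply]

lemma conv'_cunit_right (f : A →ₗ[k] B) : conv' f cunit = f := by
  unfold conv' cunit
  rw [← LinearMap.comp_assoc (Coalgebra.comul) (TensorProduct.map f _) (LinearMap.mul' k B),
    ← LinearMap.map_comp_lTensor, LinearMap.comp_assoc, LinearMap.comp_assoc,
    Coalgebra.lTensor_counit_comp_comul]
  ext a
  simp [LinearMap.mul'_apply]


lemma conv'_left_nf (f g h : A →ₗ[k] B) :
    conv' (conv' f g) h = (LinearMap.mul' k B) ∘ₗ (LinearMap.rTensor B (LinearMap.mul' k B)) ∘ₗ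
      (TensorProduct.map (TensorProduct.map f g) h) ∘ₗ
        (LinearMap.rTensor A (Coalgebra.comul (R := k) (A := A))) ∘ₗ
          (Coalgebra.comul (R := k) (A := A)) := by
  unfold conv'
  rw [← LinearMap.comp_assoc (Coalgebra.comul) (TensorProduct.map f g) (LinearMap.mul' k B),
      ← LinearMap.map_comp_rTensor, ← LinearMap.rTensor_comp_map]
  simp only [LinearMap.comp_assoc]

lemma conv'_right_nf (f g h : A →ₗ[k] B) :
    conv' f (conv' g h) = (LinearMap.mul' k B) ∘ₗ (LinearMap.lTensor B (LinearMap.mul' k B)) ∘ₗ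
      (TensorProduct.map f (TensorProduct.map g h)) ∘ₗ
        (LinearMap.lTensor A (Coalgebra.comul (R := k) (A := A))) ∘ₗ
          (Coalgebra.comul (R := k) (A := A)) := by
  unfold conv'
  rw [← LinearMap.comp_assoc (Coalgebra.comul) (TensorProduct.map g h) (LinearMap.mul' k B),
      ← LinearMap.map_comp_lTensor, ← LinearMap.lTensor_comp_map]
  simp only [LinearMap.comp_assoc]

lemma conv'_assoc (f g h : A →ₗ[k] B) : conv' (conv' f g) h = conv' f (conv' g h) := by
  rw [conv'_left_nf, conv'_right_nf, ← Coalgebra.coassoc]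
  simp only [← LinearMap.comp_assoc]
  congr 2
  ext a b c
  simp [LinearMap.mul'_apply, mul_assoc]


noncomputable def iot (f : A →ₗ[k] P) : A →ₗ[k] P ⊗[k] A :=
  (Algebra.TensorProduct.includeLeft : P →ₐ[k] P ⊗[k] A).toLinearMap ∘ₗ f

noncomputable def muR : A →ₗ[k] P ⊗[k] A :=
  (Algebra.TensorProduct.includeRight : A →ₐ[k] P ⊗[k] A).toLinearMap

noncomputable def lamS : A →ₗ[k] P ⊗[k] A :=
  (Algebra.TensorProduct.includeRight : A →ₐ[k] P ⊗[k] A).toLinearMap ∘ₗ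
    (HopfAlgebra.antipode (R := k) (A := A))

lemma Phi_eq (f : A →ₗ[k] P) :
    (TensorProduct.map f LinearMap.id) ∘ₗ adR k = conv' lamS (conv' (iot f) muR) := by
  rw [conv'_right_nf, ← Coalgebra.coassoc]
  unfold adR
  simp only [← LinearMap.comp_assoc]
  congr 2
  ext a b c
  simp [LinearMap.mul'_apply, iot, muR, lamS, Algebra.TensorProduct.tmul_mul_tmul]

lemma antipode_conv_right : conv' (HopfAlgebra.antipode (R := k) (A := A)) LinearMap.id = cunit := by
  unfold conv' cunit
  rw [show TensorProduct.map (HopfAlgebra.antipode (R := k) (A := A)) (LinearMap.id (R := k) (M := A))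
      = LinearMap.rTensor A (HopfAlgebra.antipode (R := k) (A := A)) from rfl]
  exact HopfAlgebra.mul_antipode_rTensor_comul

lemma antipode_conv_left : conv' (LinearMap.id (R := k) (M := A)) (HopfAlgebra.antipode (R := k) (A := A)) = cunit := by
  unfold conv' cunit
  rw [show TensorProduct.map (LinearMap.id (R := k) (M := A)) (HopfAlgebra.antipode (R := k) (A := A))
      = LinearMap.lTensor A (HopfAlgebra.antipode (R := k) (A := A)) from rfl]
  exact HopfAlgebra.mul_antipode_lTensor_comul

lemma lam_mu : conv' (lamS (k := k) (A := A) (P := P)) muR = cunit := by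
  have h := algHom_comp_conv (Algebra.TensorProduct.includeRight : A →ₐ[k] P ⊗[k] A)
    (HopfAlgebra.antipode (R := k) (A := A)) LinearMap.id
  rw [antipode_conv_right, algHom_comp_cunit, LinearMap.comp_id] at h
  exact h.symm

lemma mu_lam : conv' (muR (k := k) (A := A) (P := P)) lamS = cunit := by
  have h := algHom_comp_conv (Algebra.TensorProduct.includeRight : A →ₐ[k] P ⊗[k] A)
    LinearMap.id (HopfAlgebra.antipode (R := k) (A := A))
  rw [antipode_conv_left, algHom_comp_cunit, LinearMap.comp_id] at h
  exact h.symm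

lemma iot_conv (f g : A →ₗ[k] P) : iot (conv' f g) = conv' (iot f) (iot g) :=
  algHom_comp_conv _ f g

lemma Phi_cunit : (TensorProduct.map (convUnit k (P := P) (A := A)) LinearMap.id) ∘ₗ adR k = cunit := by
  rw [Phi_eq, convUnit_eq_cunit]
  unfold iot
  rw [algHom_comp_cunit, conv'_cunit_left, lam_mu]

lemma Phi_mul (f g : A →ₗ[k] P) :
    conv' ((TensorProduct.map f LinearMap.id) ∘ₗ adR k) ((TensorProduct.map g LinearMap.id) ∘ₗ adR k)
      = (TensorProduct.map (conv k f g) LinearMap.id) ∘ₗ adR k := by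
  rw [Phi_eq, Phi_eq, Phi_eq, conv_eq_conv', iot_conv,
      conv'_assoc lamS (conv' (iot f) muR), conv'_assoc (iot f) muR,
      ← conv'_assoc muR lamS (conv' (iot g) muR), mu_lam, conv'_cunit_left, ← conv'_assoc (iot f) (iot g)]

lemma conv'_apply_one (f g : A →ₗ[k] B) : conv' f g 1 = f 1 * g 1 := by
  simp [conv', Algebra.TensorProduct.one_def, LinearMap.mul'_apply]

lemma cunit_one : (cunit : A →ₗ[k] B) 1 = 1 := by
  simp [cunit]

end Aux

/-- the set of gauge transformations is a group under convolution:
it contains the convolution unit, is closed under convolution, and contains the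
convolution inverse of each of its elements. -/
theorem stmt4 (ρ : P →ₐ[k] P ⊗[k] A)
    (hcoassoc : (LinearMap.rTensor A ρ.toLinearMap) ∘ₗ ρ.toLinearMap =
      (TensorProduct.assoc k P A A).symm.toLinearMap ∘ₗ
        (LinearMap.lTensor P (Coalgebra.comul (R := k) (A := A))) ∘ₗ ρ.toLinearMap)
    (hcounit : (TensorProduct.rid k P).toLinearMap ∘ₗ
      (LinearMap.lTensor P (Coalgebra.counit (R := k) (A := A))) ∘ₗ ρ.toLinearMap =
        LinearMap.id) :
    (IsGaugeTransformation k ρ (convUnit k)) ∧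
      (∀ f g : A →ₗ[k] P, IsGaugeTransformation k ρ f → IsGaugeTransformation k ρ g →
        IsGaugeTransformation k ρ (conv k f g)) ∧
      (∀ f g : A →ₗ[k] P, IsGaugeTransformation k ρ f →
        conv k f g = convUnit k → conv k g f = convUnit k →
          IsGaugeTransformation k ρ g) := by
  refine ⟨⟨⟨convUnit k, ?_, ?_⟩, ?_, ?_⟩, ?_, ?_⟩
  · rw [conv_eq_conv', convUnit_eq_cunit, conv'_cunit_left]
  · rw [conv_eq_conv', convUnit_eq_cunit, conv'_cunit_left]
  · rw [Phi_cunit, convUnit_eq_cunit]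
    exact algHom_comp_cunit ρ
  · rw [convUnit_eq_cunit]
    exact cunit_one
  · rintro f g ⟨⟨f', hff', hf'f⟩, hfint, hf1⟩ ⟨⟨g', hgg', hg'g⟩, hgint, hg1⟩
    refine ⟨⟨conv k g' f', ?_, ?_⟩, ?_, ?_⟩
    · simp only [conv_eq_conv', convUnit_eq_cunit] at *
      rw [conv'_assoc, ← conv'_assoc g g' f', hgg', conv'_cunit_left, hff']
    · simp only [conv_eq_conv', convUnit_eq_cunit] at *
      rw [conv'_assoc, ← conv'_assoc f' f g, hf'f, conv'_cunit_left, hg'g]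
    · rw [conv_eq_conv', algHom_comp_conv, hfint, hgint, Phi_mul, conv_eq_conv']
    · rw [conv_eq_conv', conv'_apply_one, hf1, hg1, one_mul]
  · rintro f g ⟨⟨f', hff', hf'f⟩, hfint, hf1⟩ hfg hgf
    refine ⟨⟨f, hgf, hfg⟩, ?_, ?_⟩
    · have h1 : conv' (ρ.toLinearMap ∘ₗ g) (ρ.toLinearMap ∘ₗ f) = cunit := by
        rw [← algHom_comp_conv, ← conv_eq_conv', hgf, convUnit_eq_cunit]
        exact algHom_comp_cunit ρ
      have h2 : conv' ((TensorProduct.map f LinearMap.id) ∘ₗ adR k)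
          ((TensorProduct.map g LinearMap.id) ∘ₗ adR k) = cunit := by
        rw [Phi_mul, hfg]
        exact Phi_cunit
      calc ρ.toLinearMap ∘ₗ g
          = conv' (ρ.toLinearMap ∘ₗ g) cunit := (conv'_cunit_right _).symm
        _ = conv' (ρ.toLinearMap ∘ₗ g) (conv' ((TensorProduct.map f LinearMap.id) ∘ₗ adR k)
              ((TensorProduct.map g LinearMap.id) ∘ₗ adR k)) := by rw [h2]
        _ = conv' (conv' (ρ.toLinearMap ∘ₗ g) ((TensorProduct.map f LinearMap.id) ∘ₗ adR k))
              ((TensorProduct.map g LinearMap.id) ∘ₗ adR k) := (conv'_assoc _ _ _).symm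
        _ = conv' (conv' (ρ.toLinearMap ∘ₗ g) (ρ.toLinearMap ∘ₗ f))
              ((TensorProduct.map g LinearMap.id) ∘ₗ adR k) := by rw [hfint]
        _ = conv' cunit ((TensorProduct.map g LinearMap.id) ∘ₗ adR k) := by rw [h1]
        _ = (TensorProduct.map g LinearMap.id) ∘ₗ adR k := conv'_cunit_left _
    · have h := LinearMap.congr_fun hgf 1
      rw [conv_eq_conv', conv'_apply_one, hf1, mul_one] at h
      rw [h, convUnit_eq_cunit]
      exact cunit_one
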